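/- Let X: ℝ → ℝ² be twice continuously differentiable and 2π-periodic. Then for every θ ∈ ℝ, ∫_{−π}^{π} M(θ,η) (X''(η) + R⁻¹X'(η)) dη = 0 ∈ ℝ². (This follows from the kernel identity ∂²_η M(θ,η) = ∂_η M(θ,η)·R⁻¹ after integration by parts over the period.) -/

import Mathlib

/-
The kernel satisfies `∂_η M = M R⁻¹ - ½ R⁻¹` (differentiating once more gives the identity
`∂²_η M = ∂_η M · R⁻¹`). Hence `η ↦ M(θ,η) X'(η) + ½ R⁻¹ X(η)` has derivative
`M(θ,η) (X''(η) + R⁻¹ X'(η))`, and it is `2π`-periodic, so its increment over a period vanishes.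
-/

open Real intervalIntegral

/-- The matrix kernel
`M(θ,η) = (1/2)·[[1−cos(θ+η), −sin(θ+η)], [−sin(θ+η), 1+cos(θ+η)]]`. -/
noncomputable def Mmat (θ η : ℝ) : Matrix (Fin 2) (Fin 2) ℝ :=
  (1 / 2 : ℝ) •
    !![1 - Real.cos (θ + η), -Real.sin (θ + η);
       -Real.sin (θ + η), 1 + Real.cos (θ + η)]

/-- The matrix `R⁻¹ = [[0,1],[−1,0]]`, inverse of the rotation by `π/2`. -/
noncomputable def Rinv : Matrix (Fin 2) (Fin 2) ℝ := !![0, 1; -1, 0]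

open MeasureTheory
open scoped Matrix Matrix.Norms.Elementwise

theorem HasDerivAt.matrix_mulVec {𝕜 m n : Type*} [NontriviallyNormedField 𝕜] [Fintype m]
    [Fintype n] {M : 𝕜 → Matrix m n 𝕜} {M' : Matrix m n 𝕜} {v : 𝕜 → n → 𝕜} {v' : n → 𝕜} {t : 𝕜}
    (hM : HasDerivAt M M' t) (hv : HasDerivAt v v' t) :
    HasDerivAt (fun s => M s *ᵥ v s) (M' *ᵥ v t + M t *ᵥ v') t := by
  refine hasDerivAt_pi.2 fun i => ?_
  have hMi : ∀ j, HasDerivAt (fun s => M s i j) (M' i j) t := fun j =>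
    hasDerivAt_pi.1 (hasDerivAt_pi.1 hM i) j
  have hvj : ∀ j, HasDerivAt (fun s => v s j) (v' j) t := fun j => hasDerivAt_pi.1 hv j
  exact (HasDerivAt.fun_sum fun j _ => (hMi j).fun_mul (hvj j)).congr_deriv Finset.sum_add_distrib

theorem Function.Periodic.deriv {𝕜 F : Type*} [NontriviallyNormedField 𝕜] [NormedAddCommGroup F]
    [NormedSpace 𝕜 F] {f : 𝕜 → F} {c : 𝕜} (h : Function.Periodic f c) :
    Function.Periodic (deriv f) c := fun x => by
  rw [← deriv_comp_add_const, h.funext]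

theorem Function.Periodic.integral_eq_zero_of_hasDerivAt {E : Type*} [NormedAddCommGroup E]
    [NormedSpace ℝ E] [CompleteSpace E] {F f : ℝ → E} {T : ℝ} (hF : Function.Periodic F T)
    (hderiv : ∀ t, HasDerivAt F (f t) t) (a : ℝ) (hint : IntervalIntegrable f volume a (a + T)) :
    ∫ t in a..a + T, f t = 0 := by
  rw [integral_eq_sub_of_hasDerivAt (fun t _ => hderiv t) hint, hF a, sub_self]

theorem hasDerivAt_Mmat (θ η : ℝ) :
    HasDerivAt (Mmat θ) (Mmat θ η * Rinv - (1 / 2 : ℝ) • Rinv) η := by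
  have hcos : HasDerivAt (fun s => cos (θ + s)) (-sin (θ + η)) η :=
    (hasDerivAt_cos _).comp_const_add θ η
  have hsin : HasDerivAt (fun s => sin (θ + s)) (cos (θ + η)) η :=
    (hasDerivAt_sin _).comp_const_add θ η
  refine hasDerivAt_pi.2 fun i => hasDerivAt_pi.2 fun j => ?_
  fin_cases i <;> fin_cases j
  · refine ((hcos.const_sub 1).const_mul (1 / 2)).congr_deriv ?_
    simp [Mmat, Rinv]
  · refine (hsin.fun_neg.const_mul (1 / 2)).congr_deriv ?_
    simp [Mmat, Rinv]
    ring
  · refine (hsin.fun_neg.const_mul (1 / 2)).congr_deriv ?_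
    simp [Mmat, Rinv]
    ring
  · refine ((hcos.const_add 1).const_mul (1 / 2)).congr_deriv ?_
    simp [Mmat, Rinv]

theorem continuous_Mmat (θ : ℝ) : Continuous (Mmat θ) :=
  continuous_iff_continuousAt.2 fun η => (hasDerivAt_Mmat θ η).continuousAt

theorem periodic_Mmat (θ : ℝ) : Function.Periodic (Mmat θ) (2 * π) := fun η => by
  simp only [Mmat, ← add_assoc, cos_add_two_pi, sin_add_two_pi]

theorem hasDerivAt_Mmat_mulVec_add_Rinv_mulVec (θ : ℝ) {Y Y' : ℝ → Fin 2 → ℝ} {y'' : Fin 2 → ℝ}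
    {η : ℝ} (hY : HasDerivAt Y (Y' η) η) (hY' : HasDerivAt Y' y'' η) :
    HasDerivAt (fun s => Mmat θ s *ᵥ Y' s + (1 / 2 : ℝ) • (Rinv *ᵥ Y s))
      (Mmat θ η *ᵥ (y'' + Rinv *ᵥ Y' η)) η := by
  refine (((hasDerivAt_Mmat θ η).matrix_mulVec hY').add
    (((hasDerivAt_const η Rinv).matrix_mulVec hY).const_smul (1 / 2 : ℝ))).congr_deriv ?_
  simp only [Matrix.sub_mulVec, Matrix.smul_mulVec, ← Matrix.mulVec_mulVec, Matrix.zero_mulVec,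
    Matrix.mulVec_add, zero_add]
  abel

theorem integral_Mmat_second_deriv (X : ℝ → Fin 2 → ℝ) (hX : ContDiff ℝ 2 X)
    (hper : ∀ θ : ℝ, X (θ + 2 * π) = X θ) (θ : ℝ) :
    ∫ η in (-π)..π,
        (Mmat θ η).mulVec (deriv (deriv X) η + Rinv.mulVec (deriv X η)) = 0 := by
  have hX' : ContDiff ℝ 1 (deriv X) := hX.deriv'
  have hderiv : ∀ t, HasDerivAt X (deriv X t) t := fun t =>
    (hX.differentiable two_ne_zero t).hasDerivAt
  have hderiv' : ∀ t, HasDerivAt (deriv X) (deriv (deriv X) t) t := fun t =>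
    (hX'.differentiable one_ne_zero t).hasDerivAt
  have hcont : Continuous fun η => Mmat θ η *ᵥ (deriv (deriv X) η + Rinv *ᵥ deriv X η) :=
    (continuous_Mmat θ).matrix_mulVec
      ((hX'.continuous_deriv le_rfl).add (continuous_const.matrix_mulVec hX'.continuous))
  have hprim : Function.Periodic
      (fun η => Mmat θ η *ᵥ deriv X η + (1 / 2 : ℝ) • (Rinv *ᵥ X η)) (2 * π) := fun η => by
    simp only [periodic_Mmat θ η, Function.Periodic.deriv hper η, hper η]
  have h := hprim.integral_eq_zero_of_hasDerivAt
    (fun η => hasDerivAt_Mmat_mulVec_add_Rinv_mulVec θ (hderiv η) (hderiv' η)) (-π)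
    (hcont.intervalIntegrable _ _)
  rwa [show -π + 2 * π = π by ring] at h
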